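/- arXiv:math/0503547 — 2 statements merged into one kernel-verified Lean document; each statement's English description precedes it below -/
import Mathlib

section
/- Let 1 < r ≤ 2, let a ∈ ℝ and b ≥ 0, and let e be a real random variable whose distribution is symmetric about 0 (e and −e have the same law) with E(|e|^r) < ∞. Then E(|a + b e|^r) ≤ |a|^r + b^r E(|e|^r). -/
/-!
With `p = r / 2 ≤ 1`, write `|y| ^ r = (y ^ 2) ^ p`. Concavity of `t ↦ t ^ p` at the
midpoint of `(a + x) ^ 2` and `(a - x) ^ 2`, whose mean is `a ^ 2 + x ^ 2`, followed by
subadditivity of `t ↦ t ^ p`, gives the pointwise bound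
`|a + x| ^ r + |a - x| ^ r ≤ 2 (|a| ^ r + |x| ^ r)`.
Taking `x = b e` and integrating, the symmetry of `e` makes the two terms on the left have the
same expectation.
-/

open MeasureTheory ProbabilityTheory

lemma abs_rpow_eq_sq_rpow_half (y r : ℝ) : |y| ^ r = (y ^ 2) ^ (r / 2) := by
  rw [← sq_abs, ← Real.rpow_natCast, ← Real.rpow_mul (abs_nonneg y)]
  ring_nf

lemma rpow_add_rpow_le_two_mul_midpoint_rpow {p s t : ℝ} (hp₀ : 0 ≤ p) (hp₁ : p ≤ 1)
    (hs : 0 ≤ s) (ht : 0 ≤ t) : s ^ p + t ^ p ≤ 2 * ((s + t) / 2) ^ p := by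
  have h := (Real.concaveOn_rpow hp₀ hp₁).2 (Set.mem_Ici.2 hs) (Set.mem_Ici.2 ht)
    (by norm_num : (0 : ℝ) ≤ 1 / 2) (by norm_num : (0 : ℝ) ≤ 1 / 2) (add_halves 1)
  simp only [smul_eq_mul] at h
  rw [show (s + t) / 2 = 1 / 2 * s + 1 / 2 * t by ring]
  linarith

lemma abs_add_rpow_add_abs_sub_rpow_le {r : ℝ} (hr₀ : 0 ≤ r) (hr₂ : r ≤ 2) (a x : ℝ) :
    |a + x| ^ r + |a - x| ^ r ≤ 2 * (|a| ^ r + |x| ^ r) := by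
  simp only [abs_rpow_eq_sq_rpow_half _ r]
  have hp₀ : 0 ≤ r / 2 := by linarith
  have hp₁ : r / 2 ≤ 1 := by linarith
  calc ((a + x) ^ 2) ^ (r / 2) + ((a - x) ^ 2) ^ (r / 2)
      ≤ 2 * (((a + x) ^ 2 + (a - x) ^ 2) / 2) ^ (r / 2) :=
        rpow_add_rpow_le_two_mul_midpoint_rpow hp₀ hp₁ (sq_nonneg _) (sq_nonneg _)
    _ = 2 * (a ^ 2 + x ^ 2) ^ (r / 2) := by ring_nf
    _ ≤ 2 * ((a ^ 2) ^ (r / 2) + (x ^ 2) ^ (r / 2)) := by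
        gcongr
        exact Real.rpow_add_le_add_rpow (sq_nonneg _) (sq_nonneg _) hp₀ hp₁

lemma integrable_abs_const_add_mul_rpow {Ω : Type*} [MeasurableSpace Ω] {μ : Measure Ω}
    [IsFiniteMeasure μ] {r : ℝ} (hr : 0 < r) (a b : ℝ) {e : Ω → ℝ}
    (he : AEStronglyMeasurable e μ) (hmom : Integrable (fun ω => |e ω| ^ r) μ) :
    Integrable (fun ω => |a + b * e ω| ^ r) μ := by
  have hLp : MemLp e (ENNReal.ofReal r) μ := by
    rw [← integrable_norm_rpow_iff he (by simp [hr]) (by simp)]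
    simpa [Real.norm_eq_abs, ENNReal.toReal_ofReal hr.le] using hmom
  simpa [Real.norm_eq_abs, ENNReal.toReal_ofReal hr.le] using
    ((memLp_const a).add (hLp.const_mul b)).integrable_norm_rpow'

/-- Let `1 < r ≤ 2`, `a ∈ ℝ`, `b ≥ 0`, and let `e` be a real random
variable whose law is symmetric about `0` (i.e. `e` and `−e` have the same law) with
`E(|e|^r) < ∞`.  Then `E(|a + b e|^r) ≤ |a|^r + b^r E(|e|^r)`. -/
theorem stmt4 {Ω : Type*} [MeasurableSpace Ω] (μ : Measure Ω) [IsProbabilityMeasure μ]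
    (r a b : ℝ) (hr1 : 1 < r) (hr2 : r ≤ 2) (hb : 0 ≤ b)
    (e : Ω → ℝ) (he : Measurable e)
    (hsym : μ.map e = μ.map (fun ω => -e ω))
    (hmom : Integrable (fun ω => |e ω| ^ r) μ) :
    ∫ ω, |a + b * e ω| ^ r ∂μ ≤ |a| ^ r + b ^ r * ∫ ω, |e ω| ^ r ∂μ := by
  have hr0 : 0 < r := by linarith
  have hint (c : ℝ) : Integrable (fun ω => |a + c * e ω| ^ r) μ :=
    integrable_abs_const_add_mul_rpow hr0 a c he.aestronglyMeasurable hmom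
  have hflip : ∫ ω, |a - b * e ω| ^ r ∂μ = ∫ ω, |a + b * e ω| ^ r ∂μ := by
    have hu : Measurable fun x : ℝ => |a + b * x| ^ r := by fun_prop
    have hident : IdentDistrib e (fun ω => -e ω) μ μ :=
      ⟨he.aemeasurable, he.neg.aemeasurable, hsym⟩
    simpa [sub_eq_add_neg] using ((hident.comp hu).integral_eq).symm
  have hpt (ω : Ω) :
      |a + b * e ω| ^ r + |a - b * e ω| ^ r ≤ 2 * (|a| ^ r + b ^ r * |e ω| ^ r) := by
    simpa [abs_mul, abs_of_nonneg hb, Real.mul_rpow hb (abs_nonneg _)] using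
      abs_add_rpow_add_abs_sub_rpow_le hr0.le hr2 a (b * e ω)
  have hint_sub : Integrable (fun ω => |a - b * e ω| ^ r) μ := by
    simpa [sub_eq_add_neg] using hint (-b)
  have hsum : ∫ ω, (|a + b * e ω| ^ r + |a - b * e ω| ^ r) ∂μ
      ≤ ∫ ω, 2 * (|a| ^ r + b ^ r * |e ω| ^ r) ∂μ :=
    integral_mono ((hint b).add hint_sub)
      (((integrable_const _).add (hmom.const_mul _)).const_mul 2) hpt
  rw [integral_add (hint b) hint_sub, hflip,
    integral_const_mul, integral_add (integrable_const _) (hmom.const_mul _),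
    integral_const, integral_const_mul] at hsum
  simp only [probReal_univ, smul_eq_mul, one_mul] at hsum
  linarith
end

section
/- For every s ∈ (−1, r₀], sup_{x ∈ ℝ^p} E(((1 + ‖X₁(x)‖)/(1 + ‖x‖))^s) < ∞. -/
open MeasureTheory Finset
open scoped ENNReal


/-- The Euclidean norm on `ℝ^k` (realized as `Fin k → ℝ`). -/
noncomputable def euclNorm {k : ℕ} (x : Fin k → ℝ) : ℝ := Real.sqrt (∑ i, x i ^ 2)

lemma euclNorm_nonneg {k : ℕ} (x : Fin k → ℝ) : 0 ≤ euclNorm x := Real.sqrt_nonneg _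

lemma euclNorm_smul {k : ℕ} (c : ℝ) (hc : 0 ≤ c) (x : Fin k → ℝ) :
    euclNorm (c • x) = c * euclNorm x := by
  unfold euclNorm
  have h : ∑ i, (c • x) i ^ 2 = c ^ 2 * ∑ i, x i ^ 2 := by
    rw [Finset.mul_sum]; apply Finset.sum_congr rfl; intro i _
    simp [Pi.smul_apply, mul_pow]
  rw [h, Real.sqrt_mul (sq_nonneg c), Real.sqrt_sq hc]

lemma abs_le_euclNorm_cons {k : ℕ} (y : ℝ) (v : Fin k → ℝ) :
    |y| ≤ euclNorm (Fin.cons y v) := by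
  unfold euclNorm
  rw [Fin.sum_univ_succ]
  simp only [Fin.cons_zero, Fin.cons_succ]
  calc |y| = Real.sqrt (y ^ 2) := (Real.sqrt_sq_eq_abs y).symm
    _ ≤ _ := Real.sqrt_le_sqrt (le_add_of_nonneg_right (by positivity))

lemma euclNorm_cons_le {k : ℕ} (y : ℝ) (x : Fin (k+1) → ℝ) :
    euclNorm (Fin.cons y (fun j : Fin k => x j.castSucc)) ≤ |y| + euclNorm x := by
  unfold euclNorm
  rw [Fin.sum_univ_succ]
  simp only [Fin.cons_zero, Fin.cons_succ]
  have h1 : ∑ j : Fin k, x j.castSucc ^ 2 ≤ ∑ i, x i ^ 2 := by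
    rw [Fin.sum_univ_castSucc (f := fun i => x i ^ 2)]
    exact le_add_of_nonneg_right (sq_nonneg _)
  set S := ∑ i, x i ^ 2 with hS
  have hS0 : 0 ≤ S := by positivity
  have h2 : y ^ 2 + ∑ j : Fin k, x j.castSucc ^ 2 ≤ (|y| + Real.sqrt S) ^ 2 := by
    have := Real.sq_sqrt hS0
    nlinarith [Real.sqrt_nonneg S, abs_nonneg y, sq_abs y]
  calc Real.sqrt (y ^ 2 + ∑ j : Fin k, x j.castSucc ^ 2) ≤ Real.sqrt ((|y| + Real.sqrt S) ^ 2) :=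
        Real.sqrt_le_sqrt h2
    _ = |y| + Real.sqrt S := Real.sqrt_sq (by positivity)


lemma arith_id (L₀ c t B R : ℝ) (hc : 0 < c) (hB : 0 < B) (hR : 0 < R) (k : ℕ) :
    2 * L₀ * B / (c * R) * (2 ^ (k + 2) / c) ^ t * (2 * (c * R / 2 ^ (k + 1)) / B) =
      2 * L₀ * (4 / c) ^ t * ((2:ℝ) ^ (t - 1)) ^ k := by
  have h2 : (0:ℝ) ≤ 2 := by norm_num
  have e1 : ((2:ℝ) ^ (k + 2) / c) ^ t = (2:ℝ) ^ ((k : ℝ) * t) * (4 / c) ^ t := by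
    rw [show (2:ℝ) ^ (k + 2) / c = 2 ^ k * (4 / c) by ring,
      Real.mul_rpow (by positivity) (by positivity), ← Real.rpow_natCast 2 k,
      ← Real.rpow_mul h2]
  have e2 : ((2:ℝ) ^ (t - 1)) ^ k = (2:ℝ) ^ ((k:ℝ) * t) / 2 ^ k := by
    rw [← Real.rpow_natCast ((2:ℝ) ^ (t - 1)) k, ← Real.rpow_mul h2,
      show (t - 1) * (k:ℝ) = (k:ℝ) * t - (k:ℝ) by ring, Real.rpow_sub (by norm_num),
      Real.rpow_natCast]
  rw [e1, e2]
  have hp1 : (0:ℝ) < (2:ℝ) ^ k := by positivity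
  have hp2 : (0:ℝ) < (2:ℝ) ^ ((k:ℝ) * t) := Real.rpow_pos_of_pos (by norm_num) _
  field_simp
  ring

lemma core_neg {Ω : Type*} [MeasurableSpace Ω] (μ : Measure Ω) [IsProbabilityMeasure μ]
    (e : Ω → ℝ) (he : Measurable e)
    (f : ℝ → ℝ) (hf0 : ∀ u, 0 ≤ f u) (hfm : Measurable f)
    (hlaw : μ.map e = volume.withDensity (fun u => ENNReal.ofReal (f u)))
    (L₀ : ℝ) (hL₀ : ∀ u, (1 + |u|) * f u ≤ L₀)
    (t : ℝ) (ht0 : 0 < t) (ht1 : t < 1)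
    (c : ℝ) (hc : 0 < c)
    (A B R : ℝ) (hB : 0 < B) (hR : 1 ≤ R) (hmax : c * R ≤ max |A| B) :
    ∫⁻ ω, ENNReal.ofReal ((R / (1 + |A + B * e ω|)) ^ t) ∂μ ≤
      ENNReal.ofReal ((2 / c) ^ t) +
        ENNReal.ofReal (2 * L₀ * (4 / c) ^ t) * (1 - ENNReal.ofReal (2 ^ (t - 1)))⁻¹ := by
  have hR0 : (0:ℝ) < R := lt_of_lt_of_le one_pos hR
  have hL₀0 : 0 ≤ L₀ := le_trans (mul_nonneg (by positivity) (hf0 0)) (hL₀ 0)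
  -- density bound on the bad region
  have hdens : ∀ u : ℝ, |A + B * u| < c * R / 2 → f u ≤ 2 * L₀ * B / (c * R) := by
    intro u hu
    have hfu : (1 + |u|) * f u ≤ L₀ := hL₀ u
    have h1u : (1:ℝ) ≤ 1 + |u| := le_add_of_nonneg_right (abs_nonneg u)
    rcases le_max_iff.mp hmax with hA | hBig
    · -- |A| ≥ cR
      have h2 : B * |u| ≥ c * R / 2 := by
        have : |A| - |A + B * u| ≤ |B * u| := by
          have := abs_sub_abs_le_abs_sub A (A + B * u)
          rw [show A - (A + B * u) = -(B * u) by ring, abs_neg] at this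
          linarith
        rw [abs_mul, abs_of_pos hB] at this
        linarith
      have hu0 : c * R / (2 * B) ≤ |u| := by
        rw [div_le_iff₀ (by positivity)]
        nlinarith
      have h4 : f u * (c * R / (2 * B)) ≤ L₀ := by
        calc f u * (c * R / (2 * B)) ≤ f u * (1 + |u|) :=
              mul_le_mul_of_nonneg_left (by linarith [abs_nonneg u]) (hf0 u)
          _ = (1 + |u|) * f u := mul_comm _ _
          _ ≤ L₀ := hfu
      have h3 : f u * (c * R) ≤ L₀ * (2 * B) := by
        calc f u * (c * R) = f u * (c * R / (2 * B)) * (2 * B) := by field_simp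
          _ ≤ L₀ * (2 * B) := mul_le_mul_of_nonneg_right h4 (by positivity)
      rw [le_div_iff₀ (by positivity)]
      linarith
    · -- B ≥ cR
      have hfuL : f u ≤ L₀ := le_trans (le_mul_of_one_le_left (hf0 u) h1u) hfu
      rw [le_div_iff₀ (by positivity)]
      nlinarith [hf0 u]
  -- measurability
  have hmeas0 : Measurable fun u : ℝ => R / (1 + |A + B * u|) := by
    apply measurable_const.div
    exact measurable_const.add (measurable_const.add (measurable_const.mul measurable_id)).abs
  set g : ℝ → ℝ≥0∞ := fun u => ENNReal.ofReal ((R / (1 + |A + B * u|)) ^ t) with hgdef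
  have hgm : Measurable g := by
    apply Measurable.ennreal_ofReal
    measurability
  -- transfer to Lebesgue integral on ℝ
  have step1 : ∫⁻ ω, g (e ω) ∂μ = ∫⁻ u, ENNReal.ofReal (f u) * g u := by
    rw [← lintegral_map hgm he, hlaw,
      lintegral_withDensity_eq_lintegral_mul volume hfm.ennreal_ofReal hgm]
    rfl
  -- total mass of f is 1
  have hf1 : ∫⁻ u, ENNReal.ofReal (f u) = 1 := by
    have h1 := congrArg (fun m : Measure ℝ => m Set.univ) hlaw
    simp only [Measure.map_apply he MeasurableSet.univ, Set.preimage_univ,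
      measure_univ, withDensity_apply _ MeasurableSet.univ, Measure.restrict_univ] at h1
    exact h1.symm
  have habs : Measurable fun u : ℝ => |A + B * u| :=
    (measurable_const.add (measurable_const.mul measurable_id)).abs
  set S₀ : Set ℝ := {u | c * R / 2 ≤ |A + B * u|} with hS₀def
  have hS₀ : MeasurableSet S₀ := measurableSet_le measurable_const habs
  have hgoal : ∫⁻ ω, g (e ω) ∂μ ≤ ENNReal.ofReal ((2 / c) ^ t) +
      ENNReal.ofReal (2 * L₀ * (4 / c) ^ t) * (1 - ENNReal.ofReal (2 ^ (t - 1)))⁻¹ := by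
    rw [step1, ← lintegral_add_compl _ hS₀]
    gcongr
    · -- good region
      calc ∫⁻ u in S₀, ENNReal.ofReal (f u) * g u
          ≤ ∫⁻ u in S₀, ENNReal.ofReal (f u) * ENNReal.ofReal ((2 / c) ^ t) := by
            apply setLIntegral_mono (hfm.ennreal_ofReal.mul_const _)
            intro u hu
            apply mul_le_mul_right
            apply ENNReal.ofReal_le_ofReal
            apply Real.rpow_le_rpow (by positivity) _ ht0.le
            rw [div_le_div_iff₀ (by positivity) hc]
            have : c * R / 2 ≤ |A + B * u| := hu
            linarith
        _ ≤ ∫⁻ u, ENNReal.ofReal (f u) * ENNReal.ofReal ((2 / c) ^ t) :=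
            setLIntegral_le_lintegral _ _
        _ = 1 * ENNReal.ofReal ((2 / c) ^ t) := by
            rw [lintegral_mul_const _ hfm.ennreal_ofReal, hf1]
        _ = ENNReal.ofReal ((2 / c) ^ t) := one_mul _
    · -- bad region
      set Bk : ℕ → Set ℝ := fun k =>
        {u | c * R / 2 ^ (k + 2) ≤ |A + B * u| ∧ |A + B * u| < c * R / 2 ^ (k + 1)} with hBkdef
      have hsub : S₀ᶜ ⊆ {-A / B} ∪ ⋃ k, Bk k := by
        intro u hu
        have hu' : |A + B * u| < c * R / 2 := not_le.mp hu
        by_cases hz : A + B * u = 0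
        · left
          have : u = -A / B := by field_simp; linarith
          exact this
        · right
          have hd : 0 < |A + B * u| := abs_pos.mpr hz
          have hex : ∃ k : ℕ, c * R / 2 ^ (k + 2) ≤ |A + B * u| := by
            obtain ⟨m, hm⟩ := pow_unbounded_of_one_lt (c * R / |A + B * u|) (one_lt_two (α := ℝ))
            refine ⟨m, ?_⟩
            rw [div_le_iff₀ (by positivity)]
            rw [div_lt_iff₀ hd] at hm
            have : (2:ℝ) ^ m ≤ 2 ^ (m + 2) := by
              apply pow_le_pow_right₀ (by norm_num); omega
            nlinarith
          refine Set.mem_iUnion.mpr ⟨Nat.find hex, Nat.find_spec hex, ?_⟩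
          rcases Nat.eq_zero_or_pos (Nat.find hex) with h0 | hpos
          · rw [h0]
            calc |A + B * u| < c * R / 2 := hu'
              _ = c * R / 2 ^ (0 + 1) := by norm_num
          · obtain ⟨m, hm⟩ := Nat.exists_eq_succ_of_ne_zero hpos.ne'
            rw [hm]
            have := Nat.find_min hex (by omega : m < Nat.find hex)
            push_neg at this
            calc |A + B * u| < c * R / 2 ^ (m + 2) := this
              _ = c * R / 2 ^ (m + 1 + 1) := by norm_num
      calc ∫⁻ u in S₀ᶜ, ENNReal.ofReal (f u) * g u
          ≤ ∫⁻ u in {-A / B} ∪ ⋃ k, Bk k, ENNReal.ofReal (f u) * g u :=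
            lintegral_mono_set hsub
        _ ≤ (∫⁻ u in {-A / B}, ENNReal.ofReal (f u) * g u) +
              ∫⁻ u in ⋃ k, Bk k, ENNReal.ofReal (f u) * g u := lintegral_union_le _ _ _
        _ = ∫⁻ u in ⋃ k, Bk k, ENNReal.ofReal (f u) * g u := by
            rw [setLIntegral_measure_zero _ _ (measure_singleton _), zero_add]
        _ ≤ ∑' k, ∫⁻ u in Bk k, ENNReal.ofReal (f u) * g u := lintegral_iUnion_le _ _
        _ ≤ ∑' k, ENNReal.ofReal (2 * L₀ * (4 / c) ^ t) * ENNReal.ofReal ((2:ℝ) ^ (t - 1)) ^ k := by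
            apply ENNReal.tsum_le_tsum
            intro k
            have hpk1 : (0:ℝ) < 2 ^ (k + 1) := by positivity
            have hpk2 : (0:ℝ) < 2 ^ (k + 2) := by positivity
            have hup : ∀ u ∈ Bk k, |A + B * u| < c * R / 2 := by
              intro u hu
              calc |A + B * u| < c * R / 2 ^ (k + 1) := hu.2
                _ ≤ c * R / 2 := by
                  apply div_le_div_of_nonneg_left (by positivity) (by norm_num)
                  calc (2:ℝ) = 2 ^ 1 := (pow_one 2).symm
                    _ ≤ 2 ^ (k + 1) := by apply pow_le_pow_right₀ (by norm_num); omega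
            have hpt : ∀ u ∈ Bk k, ENNReal.ofReal (f u) * g u ≤
                ENNReal.ofReal (2 * L₀ * B / (c * R) * (2 ^ (k + 2) / c) ^ t) := by
              intro u hu
              rw [← ENNReal.ofReal_mul (hf0 u)]
              apply ENNReal.ofReal_le_ofReal
              apply mul_le_mul (hdens u (hup u hu)) _ (by positivity) (by positivity)
              apply Real.rpow_le_rpow (by positivity) _ ht0.le
              rw [div_le_div_iff₀ (by positivity) hc]
              have h1 : c * R / 2 ^ (k + 2) ≤ |A + B * u| := hu.1
              rw [div_le_iff₀ hpk2] at h1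
              nlinarith [abs_nonneg (A + B * u)]
            have hvol : volume (Bk k) ≤ ENNReal.ofReal (2 * (c * R / 2 ^ (k + 1)) / B) := by
              have hsub2 : Bk k ⊆ Set.Ioo ((-A - c * R / 2 ^ (k + 1)) / B)
                  ((-A + c * R / 2 ^ (k + 1)) / B) := by
                intro u hu
                have h2 := abs_lt.mp hu.2
                constructor
                · rw [div_lt_iff₀ hB]; nlinarith [h2.1]
                · rw [lt_div_iff₀ hB]; nlinarith [h2.2]
              calc volume (Bk k) ≤ volume (Set.Ioo _ _) := measure_mono hsub2
                _ = ENNReal.ofReal ((-A + c * R / 2 ^ (k + 1)) / B -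
                    (-A - c * R / 2 ^ (k + 1)) / B) := Real.volume_Ioo
                _ = ENNReal.ofReal (2 * (c * R / 2 ^ (k + 1)) / B) := by
                    congr 1; field_simp; ring
            calc ∫⁻ u in Bk k, ENNReal.ofReal (f u) * g u
                ≤ ∫⁻ _ in Bk k, ENNReal.ofReal (2 * L₀ * B / (c * R) * (2 ^ (k + 2) / c) ^ t) :=
                  setLIntegral_mono measurable_const hpt
              _ = ENNReal.ofReal (2 * L₀ * B / (c * R) * (2 ^ (k + 2) / c) ^ t) * volume (Bk k) :=
                  setLIntegral_const _ _
              _ ≤ ENNReal.ofReal (2 * L₀ * B / (c * R) * (2 ^ (k + 2) / c) ^ t) *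
                    ENNReal.ofReal (2 * (c * R / 2 ^ (k + 1)) / B) := mul_le_mul_right hvol _
              _ = ENNReal.ofReal (2 * L₀ * B / (c * R) * (2 ^ (k + 2) / c) ^ t *
                    (2 * (c * R / 2 ^ (k + 1)) / B)) := (ENNReal.ofReal_mul (by positivity)).symm
              _ = ENNReal.ofReal (2 * L₀ * (4 / c) ^ t * ((2:ℝ) ^ (t - 1)) ^ k) := by
                  rw [arith_id L₀ c t B R hc hB hR0]
              _ = ENNReal.ofReal (2 * L₀ * (4 / c) ^ t) * ENNReal.ofReal ((2:ℝ) ^ (t - 1)) ^ k := by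
                  rw [ENNReal.ofReal_mul (by positivity), ENNReal.ofReal_pow (by positivity)]
        _ = ENNReal.ofReal (2 * L₀ * (4 / c) ^ t) * (1 - ENNReal.ofReal ((2:ℝ) ^ (t - 1)))⁻¹ := by
            rw [ENNReal.tsum_mul_left, ENNReal.tsum_geometric]
  exact hgoal

/-- Let `a, b : ℝ^p → ℝ` (`p = n+1`) be Borel, `b > 0`, with
`max(|a(x)|,b(x)) = O(1+‖x‖)`, `inf_{‖x‖≤M} b(x)/(1+‖x‖) > 0` for all `M`, and suppose
there are positively 1-homogeneous Borel `a*, b*` with `b* ≥ 0`,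
`inf_{‖θ‖=1} max(|a*(θ)|,b*(θ)) > 0` and `a − a* = o(‖x‖)`, `b − b* = o(‖x‖)`.  Let `e`
have a density `f` with `sup_u (1+|u|)f(u) < ∞` and `E(|e|^{r₀}) < ∞`.  With
`X₁(x) = (a(x)+b(x)e, x₁,…,x_{p−1})`, for every `s ∈ (−1, r₀]`:
`sup_x E(((1+‖X₁(x)‖)/(1+‖x‖))^s) < ∞` (expectation as a lower integral). -/
theorem stmt13 {Ω : Type*} [MeasurableSpace Ω] (μ : Measure Ω) [IsProbabilityMeasure μ]
    (n : ℕ) (e : Ω → ℝ) (he : Measurable e)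
    (f : ℝ → ℝ) (hf0 : ∀ u, 0 ≤ f u) (hfm : Measurable f)
    (hlaw : μ.map e = volume.withDensity (fun u => ENNReal.ofReal (f u)))
    (L₀ : ℝ) (hL₀ : ∀ u, (1 + |u|) * f u ≤ L₀)
    (r₀ : ℝ) (hr₀ : 0 < r₀) (hmom : Integrable (fun ω => |e ω| ^ r₀) μ)
    (a b astar bstar : (Fin (n + 1) → ℝ) → ℝ)
    (ham : Measurable a) (hbm : Measurable b)
    (hasm : Measurable astar) (hbsm : Measurable bstar)
    (hbpos : ∀ x, 0 < b x)
    (hgrow : ∃ K : ℝ, ∀ x, max |a x| (b x) ≤ K * (1 + euclNorm x))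
    (hbinf : ∀ M : ℝ, ∃ c : ℝ, 0 < c ∧ ∀ x, euclNorm x ≤ M → c * (1 + euclNorm x) ≤ b x)
    (hah : ∀ c : ℝ, 0 < c → ∀ x, astar (c • x) = c * astar x)
    (hbh : ∀ c : ℝ, 0 < c → ∀ x, bstar (c • x) = c * bstar x)
    (hbs0 : ∀ x, 0 ≤ bstar x)
    (hL₁ : ∃ L₁ : ℝ, 0 < L₁ ∧ ∀ x, euclNorm x = 1 → L₁ ≤ max |astar x| (bstar x))
    (hao : ∀ ε : ℝ, 0 < ε → ∃ M : ℝ, ∀ x, M < euclNorm x → |a x - astar x| ≤ ε * euclNorm x)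
    (hbo : ∀ ε : ℝ, 0 < ε → ∃ M : ℝ, ∀ x, M < euclNorm x → |b x - bstar x| ≤ ε * euclNorm x) :
    ∀ s : ℝ, -1 < s → s ≤ r₀ →
      ∃ C : ℝ, ∀ x : Fin (n + 1) → ℝ,
        ∫⁻ ω, ENNReal.ofReal
            (((1 + euclNorm (Fin.cons (a x + b x * e ω)
                (fun j : Fin n => x j.castSucc) : Fin (n + 1) → ℝ)) /
              (1 + euclNorm x)) ^ s) ∂μ ≤ ENNReal.ofReal C := by
  -- uniform lower bound on max(|a|,b)
  have key : ∃ c : ℝ, 0 < c ∧ ∀ x, c * (1 + euclNorm x) ≤ max |a x| (b x) := by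
    obtain ⟨L₁, hL₁0, hL₁'⟩ := hL₁
    obtain ⟨Ma, hMa⟩ := hao (L₁ / 4) (by positivity)
    obtain ⟨Mb, hMb⟩ := hbo (L₁ / 4) (by positivity)
    set M := max (max Ma Mb) 1 with hMdef
    obtain ⟨c₁, hc₁0, hc₁⟩ := hbinf M
    refine ⟨min c₁ (3 * L₁ / 8), lt_min hc₁0 (by positivity), ?_⟩
    intro x
    have hxn := euclNorm_nonneg x
    rcases le_or_gt (euclNorm x) M with hx | hx
    · calc min c₁ (3 * L₁ / 8) * (1 + euclNorm x) ≤ c₁ * (1 + euclNorm x) :=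
          mul_le_mul_of_nonneg_right (min_le_left _ _) (by linarith)
        _ ≤ b x := hc₁ x hx
        _ ≤ max |a x| (b x) := le_max_right _ _
    · have hr1 : (1:ℝ) ≤ euclNorm x := le_trans (le_max_right _ 1) hx.le
      have hr0 : (0:ℝ) < euclNorm x := lt_of_lt_of_le one_pos hr1
      set r := euclNorm x with hrdef
      set θ := r⁻¹ • x with hθdef
      have hθ : euclNorm θ = 1 := by
        rw [hθdef, euclNorm_smul _ (inv_nonneg.mpr hr0.le), inv_mul_cancel₀ hr0.ne']
      have hxθ : x = r • θ := by
        rw [hθdef, smul_smul, mul_inv_cancel₀ hr0.ne', one_smul]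
      have has : astar x = r * astar θ := by
        have := hah r hr0 θ; rw [← hxθ] at this; exact this
      have hbs : bstar x = r * bstar θ := by
        have := hbh r hr0 θ; rw [← hxθ] at this; exact this
      have haa : |a x - astar x| ≤ L₁ / 4 * r :=
        hMa x (lt_of_le_of_lt (le_trans (le_max_left Ma Mb) (le_max_left _ 1)) hx)
      have hbb : |b x - bstar x| ≤ L₁ / 4 * r :=
        hMb x (lt_of_le_of_lt (le_trans (le_max_right Ma Mb) (le_max_left _ 1)) hx)
      have hmin : min c₁ (3 * L₁ / 8) * (1 + r) ≤ 3 * L₁ / 4 * r := by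
        nlinarith [min_le_right c₁ (3 * L₁ / 8)]
      rcases le_max_iff.mp (hL₁' θ hθ) with h | h
      · have h1 : |astar x| = r * |astar θ| := by
          rw [has, abs_mul, abs_of_pos hr0]
        have h2 : |astar x| - |a x| ≤ |a x - astar x| := by
          have := abs_sub_abs_le_abs_sub (astar x) (a x)
          rw [abs_sub_comm] at this; linarith
        have h3 : 3 * L₁ / 4 * r ≤ |a x| := by nlinarith
        exact le_trans hmin (le_trans h3 (le_max_left _ _))
      · have h2 : bstar x - b x ≤ |b x - bstar x| := by
          have := le_abs_self (bstar x - b x); rw [abs_sub_comm] at this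
          linarith [le_abs_self (bstar x - b x)]
        have h3 : 3 * L₁ / 4 * r ≤ b x := by nlinarith [hbs]
        exact le_trans hmin (le_trans h3 (le_max_right _ _))
  obtain ⟨c, hc0, hcmax⟩ := key
  intro s hs1 hsr
  rcases le_or_gt 0 s with hs0 | hs0
  · -- nonnegative exponent case
    obtain ⟨K, hK⟩ := hgrow
    have hK0 : 0 < K := by
      have h0 : euclNorm (0 : Fin (n + 1) → ℝ) = 0 := by simp [euclNorm]
      have h1 := lt_of_lt_of_le (lt_of_lt_of_le (hbpos 0) (le_max_right |a 0| _)) (hK 0)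
      rw [h0] at h1; linarith
    set C₁ : ℝ := (1 + K) ^ r₀ * 2 ^ r₀ with hC₁def
    have hC₁0 : 0 ≤ C₁ := by positivity
    have hint : Integrable (fun ω => C₁ * (1 + |e ω| ^ r₀)) μ :=
      ((integrable_const 1).add hmom).const_mul C₁
    refine ⟨∫ ω, C₁ * (1 + |e ω| ^ r₀) ∂μ, fun x => ?_⟩
    have hxn := euclNorm_nonneg x
    have hptw : ∀ ω, ENNReal.ofReal
        (((1 + euclNorm (Fin.cons (a x + b x * e ω)
          (fun j : Fin n => x j.castSucc) : Fin (n + 1) → ℝ)) / (1 + euclNorm x)) ^ s) ≤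
        ENNReal.ofReal (C₁ * (1 + |e ω| ^ r₀)) := by
      intro ω
      apply ENNReal.ofReal_le_ofReal
      set Y := a x + b x * e ω with hYdef
      have hax : |a x| ≤ K * (1 + euclNorm x) := le_trans (le_max_left _ _) (hK x)
      have hbx : b x ≤ K * (1 + euclNorm x) := le_trans (le_max_right _ _) (hK x)
      have hYb : |Y| ≤ K * (1 + euclNorm x) * (1 + |e ω|) := by
        calc |Y| ≤ |a x| + |b x * e ω| := abs_add_le _ _
          _ = |a x| + b x * |e ω| := by rw [abs_mul, abs_of_pos (hbpos x)]
          _ ≤ K * (1 + euclNorm x) + K * (1 + euclNorm x) * |e ω| := by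
              have := abs_nonneg (e ω)
              nlinarith [hbpos x]
          _ = K * (1 + euclNorm x) * (1 + |e ω|) := by ring
      have hcons := euclNorm_cons_le Y x
      have hratio : (1 + euclNorm (Fin.cons Y (fun j : Fin n => x j.castSucc) :
          Fin (n + 1) → ℝ)) / (1 + euclNorm x) ≤ (1 + K) * (1 + |e ω|) := by
        rw [div_le_iff₀ (by linarith)]
        have he0 := abs_nonneg (e ω)
        nlinarith [euclNorm_nonneg (Fin.cons Y (fun j : Fin n => x j.castSucc) :
          Fin (n + 1) → ℝ)]
      have hone : (1:ℝ) ≤ (1 + K) * (1 + |e ω|) := by nlinarith [abs_nonneg (e ω)]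
      calc ((1 + euclNorm (Fin.cons Y (fun j : Fin n => x j.castSucc) :
              Fin (n + 1) → ℝ)) / (1 + euclNorm x)) ^ s
          ≤ ((1 + K) * (1 + |e ω|)) ^ s := by
            apply Real.rpow_le_rpow _ hratio hs0
            have h0 := euclNorm_nonneg (Fin.cons Y (fun j : Fin n => x j.castSucc) :
              Fin (n + 1) → ℝ)
            have h0' := euclNorm_nonneg x
            positivity
        _ ≤ ((1 + K) * (1 + |e ω|)) ^ r₀ := Real.rpow_le_rpow_of_exponent_le hone hsr
        _ = (1 + K) ^ r₀ * (1 + |e ω|) ^ r₀ := Real.mul_rpow (by linarith) (by positivity)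
        _ ≤ C₁ * (1 + |e ω| ^ r₀) := by
            rw [hC₁def, mul_assoc]
            apply mul_le_mul_of_nonneg_left _ (by positivity)
            have h1 : (1 + |e ω|) ≤ 2 * max 1 |e ω| := by
              rcases le_total |e ω| 1 with h | h
              · calc 1 + |e ω| ≤ 2 := by linarith
                  _ ≤ 2 * max 1 |e ω| := by nlinarith [le_max_left 1 |e ω|]
              · calc 1 + |e ω| ≤ 2 * |e ω| := by linarith
                  _ ≤ 2 * max 1 |e ω| := by nlinarith [le_max_right 1 |e ω|]
            calc (1 + |e ω|) ^ r₀ ≤ (2 * max 1 |e ω|) ^ r₀ :=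
                  Real.rpow_le_rpow (by positivity) h1 hr₀.le
              _ = 2 ^ r₀ * (max 1 |e ω|) ^ r₀ := Real.mul_rpow (by norm_num)
                  (le_max_of_le_left zero_le_one)
              _ ≤ 2 ^ r₀ * (1 + |e ω| ^ r₀) := by
                  apply mul_le_mul_of_nonneg_left _ (by positivity)
                  rcases max_choice 1 |e ω| with h | h
                  · rw [h, Real.one_rpow]
                    have : 0 ≤ |e ω| ^ r₀ := Real.rpow_nonneg (abs_nonneg _) _
                    linarith
                  · rw [h]; linarith
    calc ∫⁻ ω, ENNReal.ofReal
          (((1 + euclNorm (Fin.cons (a x + b x * e ω)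
            (fun j : Fin n => x j.castSucc) : Fin (n + 1) → ℝ)) / (1 + euclNorm x)) ^ s) ∂μ
        ≤ ∫⁻ ω, ENNReal.ofReal (C₁ * (1 + |e ω| ^ r₀)) ∂μ := lintegral_mono hptw
      _ = ENNReal.ofReal (∫ ω, C₁ * (1 + |e ω| ^ r₀) ∂μ) := by
          rw [ofReal_integral_eq_lintegral_ofReal hint]
          apply Filter.Eventually.of_forall
          intro ω
          have : 0 ≤ |e ω| ^ r₀ := Real.rpow_nonneg (abs_nonneg _) _
          positivity
  · -- negative exponent case
    set t : ℝ := -s with htdef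
    have ht0 : 0 < t := by simp [htdef]; linarith
    have ht1 : t < 1 := by simp [htdef]; linarith
    set Cbar : ℝ≥0∞ := ENNReal.ofReal ((2 / c) ^ t) +
        ENNReal.ofReal (2 * L₀ * (4 / c) ^ t) * (1 - ENNReal.ofReal ((2:ℝ) ^ (t - 1)))⁻¹
      with hCbardef
    have hfin : Cbar ≠ ⊤ := by
      have hlt : ENNReal.ofReal ((2:ℝ) ^ (t - 1)) < 1 := by
        rw [ENNReal.ofReal_lt_one]
        exact Real.rpow_lt_one_of_one_lt_of_neg one_lt_two (by linarith)
      have hne : (1 : ℝ≥0∞) - ENNReal.ofReal ((2:ℝ) ^ (t - 1)) ≠ 0 := by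
        intro h
        exact absurd (tsub_eq_zero_iff_le.mp h) (not_le.mpr hlt)
      apply ENNReal.add_ne_top.mpr
      exact ⟨ENNReal.ofReal_ne_top,
        ENNReal.mul_ne_top ENNReal.ofReal_ne_top (ENNReal.inv_ne_top.mpr hne)⟩
    refine ⟨Cbar.toReal, fun x => ?_⟩
    rw [ENNReal.ofReal_toReal hfin]
    have hxn := euclNorm_nonneg x
    have hR1 : (1:ℝ) ≤ 1 + euclNorm x := by linarith
    have hptw : ∀ ω, ENNReal.ofReal
        (((1 + euclNorm (Fin.cons (a x + b x * e ω)
          (fun j : Fin n => x j.castSucc) : Fin (n + 1) → ℝ)) / (1 + euclNorm x)) ^ s) ≤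
        ENNReal.ofReal (((1 + euclNorm x) / (1 + |a x + b x * e ω|)) ^ t) := by
      intro ω
      apply ENNReal.ofReal_le_ofReal
      set Y := a x + b x * e ω with hYdef
      have hY0 := abs_nonneg Y
      have h1 : (0:ℝ) < (1 + |Y|) / (1 + euclNorm x) := by positivity
      have h2 : (1 + |Y|) / (1 + euclNorm x) ≤
          (1 + euclNorm (Fin.cons Y (fun j : Fin n => x j.castSucc) :
            Fin (n + 1) → ℝ)) / (1 + euclNorm x) := by
        gcongr
        exact abs_le_euclNorm_cons Y _
      have h3 : ((1 + euclNorm x) / (1 + |Y|)) ^ t =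
          ((1 + |Y|) / (1 + euclNorm x)) ^ s := by
        rw [show (1 + euclNorm x) / (1 + |Y|) = ((1 + |Y|) / (1 + euclNorm x))⁻¹ by
            rw [inv_div],
          Real.inv_rpow h1.le, htdef, Real.rpow_neg h1.le, inv_inv]
      exact le_trans (Real.rpow_le_rpow_of_nonpos h1 h2 hs0.le) (le_of_eq h3.symm)
    calc ∫⁻ ω, ENNReal.ofReal
          (((1 + euclNorm (Fin.cons (a x + b x * e ω)
            (fun j : Fin n => x j.castSucc) : Fin (n + 1) → ℝ)) / (1 + euclNorm x)) ^ s) ∂μ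
        ≤ ∫⁻ ω, ENNReal.ofReal
            (((1 + euclNorm x) / (1 + |a x + b x * e ω|)) ^ t) ∂μ := lintegral_mono hptw
      _ ≤ Cbar := core_neg μ e he f hf0 hfm hlaw L₀ hL₀ t ht0 ht1 c hc0
            (a x) (b x) (1 + euclNorm x) (hbpos x) hR1 (hcmax x)
end
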